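/- Let H be a simple non-abelian Leibniz algebra over a field of characteristic different from two, and let g = ⊕_{i=1}^∞ H_i be the direct sum of countably infinitely many isomorphic copies of H, with componentwise bracket. Then g is not Artinian, but for every two-sided ideal J of g the quotient g/J satisfies the minimal condition on solvable ideals. -/

import Mathlib

universe u v

/-- A (left) Leibniz algebra over a field `K`: a `K`-vector space with a bilinear
bracket satisfying the left Leibniz identity. -/
class LeibnizAlgebra (K : Type u) (g : Type v) [Field K] [AddCommGroup g] [Module K g]
    extends Bracket g g where
  add_bracket : ∀ x y z : g, ⁅x + y, z⁆ = ⁅x, z⁆ + ⁅y, z⁆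
  bracket_add : ∀ x y z : g, ⁅x, y + z⁆ = ⁅x, y⁆ + ⁅x, z⁆
  smul_bracket : ∀ (c : K) (x y : g), ⁅c • x, y⁆ = c • ⁅x, y⁆
  bracket_smul : ∀ (c : K) (x y : g), ⁅x, c • y⁆ = c • ⁅x, y⁆
  leibniz : ∀ x y z : g, ⁅x, ⁅y, z⁆⁆ = ⁅⁅x, y⁆, z⁆ + ⁅y, ⁅x, z⁆⁆

namespace Leibniz

section Defs

variable (K : Type u) (g : Type v) [Field K] [AddCommGroup g] [Module K g] [LeibnizAlgebra K g]

lemma zero_bracket (y : g) : ⁅(0 : g), y⁆ = 0 := by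
  have h := LeibnizAlgebra.smul_bracket (0 : K) (0 : g) y
  simpa using h

lemma bracket_zero (y : g) : ⁅y, (0 : g)⁆ = 0 := by
  have h := LeibnizAlgebra.bracket_smul (0 : K) y (0 : g)
  simpa using h

lemma neg_bracket (x y : g) : ⁅-x, y⁆ = -⁅x, y⁆ := by
  have h := LeibnizAlgebra.smul_bracket (-1 : K) x y
  simpa using h

lemma bracket_neg (x y : g) : ⁅x, -y⁆ = -⁅x, y⁆ := by
  have h := LeibnizAlgebra.bracket_smul (-1 : K) x y
  simpa using h

lemma sub_bracket (x x' y : g) : ⁅x - x', y⁆ = ⁅x, y⁆ - ⁅x', y⁆ := by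
  rw [sub_eq_add_neg, LeibnizAlgebra.add_bracket, neg_bracket K, ← sub_eq_add_neg]

lemma bracket_sub (x y y' : g) : ⁅x, y - y'⁆ = ⁅x, y⁆ - ⁅x, y'⁆ := by
  rw [sub_eq_add_neg, LeibnizAlgebra.bracket_add, bracket_neg K, ← sub_eq_add_neg]

/-- A (two-sided) ideal of a Leibniz algebra: a subspace `I` with `⁅g,I⁆ ⊆ I` and
`⁅I,g⁆ ⊆ I`. -/
def IsIdeal (I : Submodule K g) : Prop :=
  ∀ x : g, ∀ a ∈ I, ⁅x, a⁆ ∈ I ∧ ⁅a, x⁆ ∈ I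

/-- The bracket `[A, B]` of two subspaces: the span of all brackets `⁅a, b⁆`. -/
def bk (A B : Submodule K g) : Submodule K g :=
  Submodule.span K {z : g | ∃ a ∈ A, ∃ b ∈ B, z = ⁅a, b⁆}

/-- The derived series of a subspace `I`, computed in `g`:
`I^(0) = I`, `I^(n+1) = [I^(n), I^(n)]`. -/
def subDerived (I : Submodule K g) : ℕ → Submodule K g
  | 0 => I
  | n + 1 => bk K g (subDerived I n) (subDerived I n)

/-- The derived series of `g`: `g^(0) = g`, `g^(n+1) = [g^(n), g^(n)]`. -/
def derived : ℕ → Submodule K g := subDerived K g ⊤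

/-- A Leibniz algebra is solvable if `g^(n) = 0` for some `n`. -/
def IsSolvable : Prop := ∃ n : ℕ, derived K g n = ⊥

/-- A Leibniz algebra is abelian if its bracket is identically zero. -/
def IsAbelian : Prop := ∀ x y : g, ⁅x, y⁆ = 0

/-- A nonzero Leibniz algebra is simple if its only two-sided ideals are `⊥` and `⊤`. -/
def IsSimpleAlg : Prop :=
  (∃ x : g, x ≠ 0) ∧ ∀ I : Submodule K g, IsIdeal K g I → I = ⊥ ∨ I = ⊤

/-- A Leibniz algebra `g` is quasi-Artinian if for every descending chain of ideals
`I_1 ⊇ I_2 ⊇ ⋯` there is `m` with `[g^(m), I_m] ⊆ I_n` and `[I_m, g^(m)] ⊆ I_n` for all `n`. -/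
def QuasiArtinian : Prop :=
  ∀ I : ℕ → Submodule K g, (∀ n, IsIdeal K g (I n)) → (∀ n, I (n + 1) ≤ I n) →
    ∃ m : ℕ, ∀ n : ℕ,
      bk K g (derived K g m) (I m) ≤ I n ∧ bk K g (I m) (derived K g m) ≤ I n

/-- A Leibniz algebra is Artinian if every descending chain of two-sided ideals stabilizes. -/
def ArtinianAlg : Prop :=
  ∀ I : ℕ → Submodule K g, (∀ n, IsIdeal K g (I n)) → (∀ n, I (n + 1) ≤ I n) →
    ∃ m : ℕ, ∀ n : ℕ, m ≤ n → I n = I m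

/-- A solvable ideal: an ideal which is solvable (as a Leibniz algebra). -/
def IsSolvableIdeal (I : Submodule K g) : Prop :=
  IsIdeal K g I ∧ ∃ n : ℕ, subDerived K g I n = ⊥

/-- An abelian ideal: an ideal whose bracket vanishes identically. -/
def IsAbelianIdeal (I : Submodule K g) : Prop :=
  IsIdeal K g I ∧ ∀ x ∈ I, ∀ y ∈ I, ⁅x, y⁆ = (0 : g)

/-- Minimal condition on solvable ideals: every descending chain of solvable
two-sided ideals stabilizes. -/
def MinOnSolvableIdeals : Prop :=
  ∀ I : ℕ → Submodule K g, (∀ n, IsSolvableIdeal K g (I n)) → (∀ n, I (n + 1) ≤ I n) →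
    ∃ m : ℕ, ∀ n : ℕ, m ≤ n → I n = I m

/-- Minimal condition on abelian ideals: every descending chain of abelian
two-sided ideals stabilizes. -/
def MinOnAbelianIdeals : Prop :=
  ∀ I : ℕ → Submodule K g, (∀ n, IsAbelianIdeal K g (I n)) → (∀ n, I (n + 1) ≤ I n) →
    ∃ m : ℕ, ∀ n : ℕ, m ≤ n → I n = I m

/-- `I` is a two-sided ideal of the subalgebra `A` (both viewed as subspaces of `g`). -/
def IsIdealIn (A I : Submodule K g) : Prop :=
  I ≤ A ∧ ∀ x ∈ A, ∀ a ∈ I, ⁅x, a⁆ ∈ I ∧ ⁅a, x⁆ ∈ I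

/-- A prime ideal: a proper two-sided ideal `P` such that `[h₁, h₂] ⊆ P` for ideals
`h₁, h₂` forces `h₁ ⊆ P` or `h₂ ⊆ P`. -/
def IsPrimeIdeal (P : Submodule K g) : Prop :=
  IsIdeal K g P ∧ P ≠ ⊤ ∧
    ∀ h₁ h₂ : Submodule K g, IsIdeal K g h₁ → IsIdeal K g h₂ →
      bk K g h₁ h₂ ≤ P → h₁ ≤ P ∨ h₂ ≤ P

/-- `Leib(g)`: the subspace spanned by all squares `⁅x, x⁆`. -/
def leibIdeal : Submodule K g :=
  Submodule.span K {z : g | ∃ x : g, z = ⁅x, x⁆}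

/-- Given a subspace `C`, the preimage of the center of `g/C`:
all `x` with `⁅x, y⁆ ∈ C` and `⁅y, x⁆ ∈ C` for every `y`. -/
def centerStep (C : Submodule K g) : Submodule K g where
  carrier := {x : g | ∀ y : g, ⁅x, y⁆ ∈ C ∧ ⁅y, x⁆ ∈ C}
  add_mem' := by
    intro a b ha hb
    intro y
    constructor
    · rw [LeibnizAlgebra.add_bracket]; exact C.add_mem (ha y).1 (hb y).1
    · rw [LeibnizAlgebra.bracket_add]; exact C.add_mem (ha y).2 (hb y).2
  zero_mem' := by
    intro y
    constructor
    · rw [zero_bracket K]; exact C.zero_mem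
    · rw [bracket_zero K]; exact C.zero_mem
  smul_mem' := by
    intro c a ha y
    constructor
    · rw [LeibnizAlgebra.smul_bracket]; exact C.smul_mem c (ha y).1
    · rw [LeibnizAlgebra.bracket_smul]; exact C.smul_mem c (ha y).2

/-- The transfinite upper central series of `g`: `ζ_0 = 0`,
`ζ_{α+1}/ζ_α = Z(g/ζ_α)`, and `ζ_ρ = ⋃_{α<ρ} ζ_α` at limit ordinals. -/
noncomputable def zeta : Ordinal.{0} → Submodule K g := fun o =>
  Ordinal.limitRecOn o ⊥ (fun _ C => centerStep K g C)
    (fun o _ ih => ⨆ (a : Ordinal.{0}) (h : a < o), ih a h)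

/-- `g` is hypercentral if `ζ_α(g) = g` for some ordinal `α`. -/
def Hypercentral : Prop := ∃ o : Ordinal.{0}, zeta K g o = ⊤

end Defs

section Quotient

variable {K : Type u} {g : Type v} [Field K] [AddCommGroup g] [Module K g] [LeibnizAlgebra K g]

/-- The bracket induced on the quotient `g ⧸ I` by a two-sided ideal `I`. -/
def quotBracket (I : Submodule K g) (hI : IsIdeal K g I) : g ⧸ I → g ⧸ I → g ⧸ I :=
  Quotient.map₂ (fun x y : g => ⁅x, y⁆) (by
    intro x x' hx y y' hy
    have hx' : x - x' ∈ I := (Submodule.quotientRel_def I).1 hx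
    have hy' : y - y' ∈ I := (Submodule.quotientRel_def I).1 hy
    refine (Submodule.quotientRel_def I).2 ?_
    have key : ⁅x, y⁆ - ⁅x', y'⁆ = ⁅x - x', y⁆ + ⁅x', y - y'⁆ := by
      rw [sub_bracket K, bracket_sub K]
      abel
    rw [key]
    exact I.add_mem (hI y (x - x') hx').2 (hI x' (y - y') hy').1)

@[simp] lemma quotBracket_mk (I : Submodule K g) (hI : IsIdeal K g I) (x y : g) :
    quotBracket I hI (Submodule.Quotient.mk x) (Submodule.Quotient.mk y) =
      Submodule.Quotient.mk ⁅x, y⁆ := rfl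

/-- The quotient Leibniz algebra `g ⧸ I` of `g` by a two-sided ideal `I`. -/
def quotLeibniz (I : Submodule K g) (hI : IsIdeal K g I) : LeibnizAlgebra K (g ⧸ I) where
  bracket := quotBracket I hI
  add_bracket X Y Z := by
    obtain ⟨x, rfl⟩ := Submodule.Quotient.mk_surjective I X
    obtain ⟨y, rfl⟩ := Submodule.Quotient.mk_surjective I Y
    obtain ⟨z, rfl⟩ := Submodule.Quotient.mk_surjective I Z
    show quotBracket I hI (Submodule.Quotient.mk x + Submodule.Quotient.mk y)
        (Submodule.Quotient.mk z) = _
    rw [← Submodule.Quotient.mk_add, quotBracket_mk]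
    show _ = quotBracket I hI (Submodule.Quotient.mk x) (Submodule.Quotient.mk z) +
      quotBracket I hI (Submodule.Quotient.mk y) (Submodule.Quotient.mk z)
    rw [quotBracket_mk, quotBracket_mk, ← Submodule.Quotient.mk_add,
      LeibnizAlgebra.add_bracket]
  bracket_add X Y Z := by
    obtain ⟨x, rfl⟩ := Submodule.Quotient.mk_surjective I X
    obtain ⟨y, rfl⟩ := Submodule.Quotient.mk_surjective I Y
    obtain ⟨z, rfl⟩ := Submodule.Quotient.mk_surjective I Z
    show quotBracket I hI (Submodule.Quotient.mk x)
        (Submodule.Quotient.mk y + Submodule.Quotient.mk z) = _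
    rw [← Submodule.Quotient.mk_add, quotBracket_mk]
    show _ = quotBracket I hI (Submodule.Quotient.mk x) (Submodule.Quotient.mk y) +
      quotBracket I hI (Submodule.Quotient.mk x) (Submodule.Quotient.mk z)
    rw [quotBracket_mk, quotBracket_mk, ← Submodule.Quotient.mk_add,
      LeibnizAlgebra.bracket_add]
  smul_bracket c X Y := by
    obtain ⟨x, rfl⟩ := Submodule.Quotient.mk_surjective I X
    obtain ⟨y, rfl⟩ := Submodule.Quotient.mk_surjective I Y
    show quotBracket I hI (c • Submodule.Quotient.mk x) (Submodule.Quotient.mk y) =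
      c • quotBracket I hI (Submodule.Quotient.mk x) (Submodule.Quotient.mk y)
    rw [← Submodule.Quotient.mk_smul, quotBracket_mk, quotBracket_mk,
      ← Submodule.Quotient.mk_smul, LeibnizAlgebra.smul_bracket]
  bracket_smul c X Y := by
    obtain ⟨x, rfl⟩ := Submodule.Quotient.mk_surjective I X
    obtain ⟨y, rfl⟩ := Submodule.Quotient.mk_surjective I Y
    show quotBracket I hI (Submodule.Quotient.mk x) (c • Submodule.Quotient.mk y) =
      c • quotBracket I hI (Submodule.Quotient.mk x) (Submodule.Quotient.mk y)
    rw [← Submodule.Quotient.mk_smul, quotBracket_mk, quotBracket_mk,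
      ← Submodule.Quotient.mk_smul, LeibnizAlgebra.bracket_smul]
  leibniz X Y Z := by
    obtain ⟨x, rfl⟩ := Submodule.Quotient.mk_surjective I X
    obtain ⟨y, rfl⟩ := Submodule.Quotient.mk_surjective I Y
    obtain ⟨z, rfl⟩ := Submodule.Quotient.mk_surjective I Z
    show quotBracket I hI (Submodule.Quotient.mk x)
        (quotBracket I hI (Submodule.Quotient.mk y) (Submodule.Quotient.mk z)) = _
    rw [quotBracket_mk, quotBracket_mk]
    show _ = quotBracket I hI
        (quotBracket I hI (Submodule.Quotient.mk x) (Submodule.Quotient.mk y))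
        (Submodule.Quotient.mk z) +
      quotBracket I hI (Submodule.Quotient.mk y)
        (quotBracket I hI (Submodule.Quotient.mk x) (Submodule.Quotient.mk z))
    rw [quotBracket_mk, quotBracket_mk, quotBracket_mk, quotBracket_mk,
      ← Submodule.Quotient.mk_add, LeibnizAlgebra.leibniz]

/-- A two-sided ideal of a Leibniz algebra, regarded as a Leibniz algebra itself. -/
def idealLeibniz (I : Submodule K g) (hI : IsIdeal K g I) : LeibnizAlgebra K I where
  bracket a b := ⟨⁅(a : g), (b : g)⁆, (hI (a : g) (b : g) b.2).1⟩
  add_bracket a b c := Subtype.ext (by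
    show ⁅((a + b : I) : g), (c : g)⁆ = ⁅(a : g), (c : g)⁆ + ⁅(b : g), (c : g)⁆
    rw [Submodule.coe_add, LeibnizAlgebra.add_bracket])
  bracket_add a b c := Subtype.ext (by
    show ⁅(a : g), ((b + c : I) : g)⁆ = ⁅(a : g), (b : g)⁆ + ⁅(a : g), (c : g)⁆
    rw [Submodule.coe_add, LeibnizAlgebra.bracket_add])
  smul_bracket c a b := Subtype.ext (by
    show ⁅((c • a : I) : g), (b : g)⁆ = c • ⁅(a : g), (b : g)⁆
    rw [Submodule.coe_smul, LeibnizAlgebra.smul_bracket])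
  bracket_smul c a b := Subtype.ext (by
    show ⁅(a : g), ((c • b : I) : g)⁆ = c • ⁅(a : g), (b : g)⁆
    rw [Submodule.coe_smul, LeibnizAlgebra.bracket_smul])
  leibniz a b c := Subtype.ext (by
    show ⁅(a : g), ⁅(b : g), (c : g)⁆⁆ =
      ⁅⁅(a : g), (b : g)⁆, (c : g)⁆ + ⁅(b : g), ⁅(a : g), (c : g)⁆⁆
    exact LeibnizAlgebra.leibniz (a : g) (b : g) (c : g))

end Quotient

section Constructions

variable {K : Type u} [Field K]

/-- The direct sum of two Leibniz algebras, with componentwise bracket. -/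
instance prodLeibniz (g₁ : Type v) (g₂ : Type v) [AddCommGroup g₁] [Module K g₁]
    [LeibnizAlgebra K g₁] [AddCommGroup g₂] [Module K g₂] [LeibnizAlgebra K g₂] :
    LeibnizAlgebra K (g₁ × g₂) where
  bracket x y := (⁅x.1, y.1⁆, ⁅x.2, y.2⁆)
  add_bracket x y z := Prod.ext_iff.2
    ⟨LeibnizAlgebra.add_bracket x.1 y.1 z.1, LeibnizAlgebra.add_bracket x.2 y.2 z.2⟩
  bracket_add x y z := Prod.ext_iff.2
    ⟨LeibnizAlgebra.bracket_add x.1 y.1 z.1, LeibnizAlgebra.bracket_add x.2 y.2 z.2⟩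
  smul_bracket c x y := Prod.ext_iff.2
    ⟨LeibnizAlgebra.smul_bracket c x.1 y.1, LeibnizAlgebra.smul_bracket c x.2 y.2⟩
  bracket_smul c x y := Prod.ext_iff.2
    ⟨LeibnizAlgebra.bracket_smul c x.1 y.1, LeibnizAlgebra.bracket_smul c x.2 y.2⟩
  leibniz x y z := Prod.ext_iff.2
    ⟨LeibnizAlgebra.leibniz x.1 y.1 z.1, LeibnizAlgebra.leibniz x.2 y.2 z.2⟩

/-- The direct sum of countably many copies of a Leibniz algebra `H`
(finitely supported sequences), with componentwise bracket. -/
noncomputable instance finsuppLeibniz (H : Type v) [AddCommGroup H] [Module K H]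
    [LeibnizAlgebra K H] : LeibnizAlgebra K (ℕ →₀ H) where
  bracket f h := Finsupp.zipWith (fun a b : H => ⁅a, b⁆) (zero_bracket K H 0) f h
  add_bracket f f' h := by
    ext i
    simp only [Finsupp.zipWith_apply, Finsupp.add_apply]
    exact LeibnizAlgebra.add_bracket (f i) (f' i) (h i)
  bracket_add f h h' := by
    ext i
    simp only [Finsupp.zipWith_apply, Finsupp.add_apply]
    exact LeibnizAlgebra.bracket_add (f i) (h i) (h' i)
  smul_bracket c f h := by
    ext i
    simp only [Finsupp.zipWith_apply, Finsupp.smul_apply]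
    exact LeibnizAlgebra.smul_bracket c (f i) (h i)
  bracket_smul c f h := by
    ext i
    simp only [Finsupp.zipWith_apply, Finsupp.smul_apply]
    exact LeibnizAlgebra.bracket_smul c (f i) (h i)
  leibniz f h k := by
    ext i
    simp only [Finsupp.zipWith_apply, Finsupp.add_apply]
    exact LeibnizAlgebra.leibniz (f i) (h i) (k i)

end Constructions

end Leibniz

open Leibniz

section Aux

variable {K : Type u} {g : Type v} [Field K] [AddCommGroup g] [Module K g] [LeibnizAlgebra K g]

lemma bracket_mem_bk {A B : Submodule K g} {a b : g} (ha : a ∈ A) (hb : b ∈ B) :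
    ⁅a, b⁆ ∈ bk K g A B :=
  Submodule.subset_span ⟨a, ha, b, hb, rfl⟩

lemma bk_le {A B C : Submodule K g} (h : ∀ a ∈ A, ∀ b ∈ B, ⁅a, b⁆ ∈ C) :
    bk K g A B ≤ C := by
  apply Submodule.span_le.2
  rintro z ⟨a, ha, b, hb, rfl⟩
  exact h a ha b hb

lemma bk_mono {A A' B B' : Submodule K g} (hA : A ≤ A') (hB : B ≤ B') :
    bk K g A B ≤ bk K g A' B' :=
  Submodule.span_mono (by rintro z ⟨a, ha, b, hb, rfl⟩; exact ⟨a, hA ha, b, hB hb, rfl⟩)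

/-- `[g,g]` is an ideal. -/
lemma bk_top_top_isIdeal : IsIdeal K g (bk K g ⊤ ⊤) := by
  intro x a ha
  let P : Submodule K g :=
    { carrier := {a : g | ⁅x, a⁆ ∈ bk K g ⊤ ⊤ ∧ ⁅a, x⁆ ∈ bk K g ⊤ ⊤}
      add_mem' := by
        intro a b ha hb
        exact ⟨by rw [LeibnizAlgebra.bracket_add]; exact add_mem ha.1 hb.1,
          by rw [LeibnizAlgebra.add_bracket]; exact add_mem ha.2 hb.2⟩
      zero_mem' := by
        refine ⟨?_, ?_⟩
        · rw [bracket_zero K]; exact zero_mem _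
        · rw [zero_bracket K]; exact zero_mem _
      smul_mem' := by
        intro c a ha
        exact ⟨by rw [LeibnizAlgebra.bracket_smul]; exact Submodule.smul_mem _ c ha.1,
          by rw [LeibnizAlgebra.smul_bracket]; exact Submodule.smul_mem _ c ha.2⟩ }
  have hle : bk K g ⊤ ⊤ ≤ P := by
    apply bk_le
    intro a _ b _
    constructor
    · rw [LeibnizAlgebra.leibniz]
      exact add_mem (bracket_mem_bk trivial trivial) (bracket_mem_bk trivial trivial)
    · have h := LeibnizAlgebra.leibniz (K := K) a b x
      have : ⁅⁅a, b⁆, x⁆ = ⁅a, ⁅b, x⁆⁆ - ⁅b, ⁅a, x⁆⁆ := by rw [h]; abel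
      rw [this]
      exact sub_mem (bracket_mem_bk trivial trivial) (bracket_mem_bk trivial trivial)
  exact hle ha

/-- A simple non-abelian Leibniz algebra is perfect. -/
lemma bk_top_top_eq_top (hsimple : IsSimpleAlg K g) (hnonab : ¬ IsAbelian K g) :
    bk K g ⊤ ⊤ = (⊤ : Submodule K g) := by
  rcases hsimple.2 _ (bk_top_top_isIdeal (K := K) (g := g)) with h | h
  · exfalso
    apply hnonab
    intro x y
    have : ⁅x, y⁆ ∈ bk K g ⊤ ⊤ := bracket_mem_bk trivial trivial
    rw [h] at this
    simpa using this
  · exact h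

end Aux

section Finsupp

variable {K : Type u} {H : Type v} [Field K] [AddCommGroup H] [Module K H] [LeibnizAlgebra K H]

lemma fbracket_apply (f h : ℕ →₀ H) (i : ℕ) : ⁅f, h⁆ i = ⁅f i, h i⁆ := rfl

lemma single_bracket (i : ℕ) (x : H) (f : ℕ →₀ H) :
    ⁅Finsupp.single i x, f⁆ = Finsupp.single i ⁅x, f i⁆ := by
  ext j
  rw [fbracket_apply]
  by_cases hj : i = j
  · subst hj; rw [Finsupp.single_eq_same, Finsupp.single_eq_same]
  · rw [Finsupp.single_eq_of_ne' hj, Finsupp.single_eq_of_ne' hj, zero_bracket K]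

lemma bracket_single (i : ℕ) (x : H) (f : ℕ →₀ H) :
    ⁅f, Finsupp.single i x⁆ = Finsupp.single i ⁅f i, x⁆ := by
  ext j
  rw [fbracket_apply]
  by_cases hj : i = j
  · subst hj; rw [Finsupp.single_eq_same, Finsupp.single_eq_same]
  · rw [Finsupp.single_eq_of_ne' hj, Finsupp.single_eq_of_ne' hj, bracket_zero K]

/-- If an ideal of `⊕ H` has some element with nonzero `i`-th coordinate, then it
contains the whole `i`-th copy of `H`. -/
lemma single_mem_of_ideal (hsimple : IsSimpleAlg K H) (hnonab : ¬ IsAbelian K H)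
    {A : Submodule K (ℕ →₀ H)} (hA : IsIdeal K (ℕ →₀ H) A) {i : ℕ} {a₀ : ℕ →₀ H}
    (ha₀ : a₀ ∈ A) (hne : a₀ i ≠ 0) : ∀ h : H, Finsupp.single i h ∈ A := by
  -- the projection of A to the i-th coordinate
  set Ai : Submodule K H := A.map (Finsupp.lapply i) with hAi
  have hAiIdeal : IsIdeal K H Ai := by
    rintro x y ⟨a, ha, rfl⟩
    constructor
    · exact ⟨⁅Finsupp.single i x, a⁆, (hA _ _ ha).1, by rw [single_bracket]; simp⟩
    · exact ⟨⁅a, Finsupp.single i x⁆, (hA _ _ ha).2, by rw [bracket_single]; simp⟩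
  have hAitop : Ai = ⊤ := by
    rcases hsimple.2 _ hAiIdeal with h | h
    · exfalso
      have : a₀ i ∈ Ai := ⟨a₀, ha₀, rfl⟩
      rw [h] at this
      exact hne (by simpa using this)
    · exact h
  intro h
  have hh : h ∈ bk K H ⊤ ⊤ := by rw [bk_top_top_eq_top hsimple hnonab]; trivial
  have hle : bk K H ⊤ ⊤ ≤ A.comap (Finsupp.lsingle i) := by
    apply bk_le
    intro x _ y _
    have hy : y ∈ Ai := by rw [hAitop]; trivial
    obtain ⟨a, ha, rfl⟩ := hy
    show Finsupp.single i ⁅x, Finsupp.lapply (R := K) i a⁆ ∈ A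
    have : Finsupp.single i ⁅x, Finsupp.lapply (R := K) i a⁆ = ⁅Finsupp.single i x, a⁆ := by
      rw [single_bracket]; rfl
    rw [this]
    exact (hA _ _ ha).1
  exact hle hh

/-- Every ideal `A` of `⊕ H` satisfies `A ≤ [A, A]`. -/
lemma ideal_le_bk_self (hsimple : IsSimpleAlg K H) (hnonab : ¬ IsAbelian K H)
    {A : Submodule K (ℕ →₀ H)} (hA : IsIdeal K (ℕ →₀ H) A) :
    A ≤ bk K (ℕ →₀ H) A A := by
  intro a ha
  have key : ∀ i ∈ a.support, Finsupp.single i (a i) ∈ bk K (ℕ →₀ H) A A := by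
    intro i hi
    have hne : a i ≠ 0 := Finsupp.mem_support_iff.1 hi
    have hsing : ∀ h : H, Finsupp.single i h ∈ A :=
      single_mem_of_ideal hsimple hnonab hA ha hne
    have hle : bk K H ⊤ ⊤ ≤ (bk K (ℕ →₀ H) A A).comap (Finsupp.lsingle i) := by
      apply bk_le
      intro x _ y _
      show Finsupp.single i ⁅x, y⁆ ∈ bk K (ℕ →₀ H) A A
      have : Finsupp.single i ⁅x, y⁆ = ⁅Finsupp.single i x, Finsupp.single i y⁆ := by
        rw [single_bracket]; simp
      rw [this]
      exact bracket_mem_bk (hsing x) (hsing y)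
    have : a i ∈ bk K H ⊤ ⊤ := by rw [bk_top_top_eq_top hsimple hnonab]; trivial
    exact hle this
  have : a = ∑ i ∈ a.support, Finsupp.single i (a i) := (Finsupp.sum_single a).symm
  rw [this]
  exact Submodule.sum_mem _ key

end Finsupp

/-- The direct sum of countably infinitely many copies of a simple non-abelian Leibniz
algebra (over a field of characteristic ≠ 2) is not Artinian, but each of its quotients
satisfies the minimal condition on solvable ideals. -/
theorem directSum_simple_not_artinian_but_quotients_minOnSolvable
    (K : Type u) (H : Type v) [Field K] [AddCommGroup H] [Module K H] [LeibnizAlgebra K H]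
    (hchar : ringChar K ≠ 2) (hsimple : IsSimpleAlg K H) (hnonab : ¬ IsAbelian K H) :
    ¬ ArtinianAlg K (ℕ →₀ H) ∧
      ∀ (J : Submodule K (ℕ →₀ H)) (hJ : IsIdeal K (ℕ →₀ H) J),
        @MinOnSolvableIdeals K ((ℕ →₀ H) ⧸ J) _ _ _ (quotLeibniz J hJ) := by
  constructor
  · -- not Artinian: the "tail" ideals form a strictly descending chain
    intro hart
    obtain ⟨x, hx⟩ := hsimple.1
    let T : ℕ → Submodule K (ℕ →₀ H) := fun n =>
      { carrier := {f : ℕ →₀ H | ∀ i < n, f i = 0}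
        add_mem' := by
          intro a b ha hb i hi
          show (a + b) i = 0
          rw [Finsupp.add_apply, ha i hi, hb i hi, add_zero]
        zero_mem' := by intro i _; rfl
        smul_mem' := by
          intro c a ha i hi
          show (c • a) i = 0
          rw [Finsupp.smul_apply, ha i hi, smul_zero] }
    have hTmem : ∀ n (f : ℕ →₀ H), f ∈ T n ↔ ∀ i < n, f i = 0 := fun n f => Iff.rfl
    have hTideal : ∀ n, IsIdeal K (ℕ →₀ H) (T n) := by
      intro n y a ha
      constructor
      · intro i hi
        show ⁅y, a⁆ i = 0
        rw [fbracket_apply, (hTmem n a).1 ha i hi, bracket_zero K]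
      · intro i hi
        show ⁅a, y⁆ i = 0
        rw [fbracket_apply, (hTmem n a).1 ha i hi, zero_bracket K]
    have hTdesc : ∀ n, T (n + 1) ≤ T n := by
      intro n f hf i hi
      exact (hTmem (n + 1) f).1 hf i (Nat.lt_succ_of_lt hi)
    obtain ⟨m, hm⟩ := hart T hTideal hTdesc
    have h1 : Finsupp.single m x ∈ T m := by
      intro i hi
      show Finsupp.single m x i = 0
      exact Finsupp.single_eq_of_ne' (Nat.ne_of_gt hi)
    have h2 : Finsupp.single m x ∈ T (m + 1) := by
      rw [hm (m + 1) (Nat.le_succ m)]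
      exact h1
    have : Finsupp.single m x m = 0 := (hTmem (m + 1) _).1 h2 m (Nat.lt_succ_self m)
    rw [Finsupp.single_eq_same] at this
    exact hx this
  · -- every quotient satisfies the minimal condition on solvable ideals,
    -- since every solvable ideal of a quotient is zero
    intro J hJ
    letI inst := quotLeibniz J hJ
    have key : ∀ Ibar : Submodule K ((ℕ →₀ H) ⧸ J), IsSolvableIdeal K ((ℕ →₀ H) ⧸ J) Ibar →
        Ibar = ⊥ := by
      intro Ibar hIbar
      obtain ⟨hIdeal, n, hn⟩ := hIbar
      set S := Ibar.comap J.mkQ with hSdef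
      have hSmem : ∀ a : ℕ →₀ H, a ∈ S ↔ (Submodule.Quotient.mk a : (ℕ →₀ H) ⧸ J) ∈ Ibar :=
        fun a => Iff.rfl
      have hmk : ∀ a b : ℕ →₀ H,
          ⁅(Submodule.Quotient.mk a : (ℕ →₀ H) ⧸ J), Submodule.Quotient.mk b⁆ =
            (Submodule.Quotient.mk ⁅a, b⁆ : (ℕ →₀ H) ⧸ J) := fun a b => by
        with_unfolding_all rfl
      have hSIdeal : IsIdeal K (ℕ →₀ H) S := by
        intro y a ha
        constructor
        · rw [hSmem, ← hmk]
          exact (hIdeal (Submodule.Quotient.mk y) _ ((hSmem a).1 ha)).1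
        · rw [hSmem, ← hmk]
          exact (hIdeal (Submodule.Quotient.mk y) _ ((hSmem a).1 ha)).2
      have hle : Ibar ≤ bk K ((ℕ →₀ H) ⧸ J) Ibar Ibar := by
        intro z hz
        obtain ⟨a, rfl⟩ := Submodule.Quotient.mk_surjective J z
        have haS : a ∈ S := (hSmem a).2 hz
        have habk : a ∈ bk K (ℕ →₀ H) S S := ideal_le_bk_self hsimple hnonab hSIdeal haS
        have hmap : Submodule.map J.mkQ (bk K (ℕ →₀ H) S S) ≤
            bk K ((ℕ →₀ H) ⧸ J) Ibar Ibar := by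
          rw [bk, Submodule.map_span]
          apply Submodule.span_le.2
          rintro w ⟨v, ⟨a, ha, b, hb, rfl⟩, rfl⟩
          apply Submodule.subset_span
          exact ⟨Submodule.Quotient.mk a, (hSmem a).1 ha,
            Submodule.Quotient.mk b, (hSmem b).1 hb, (hmk a b).symm⟩
        exact hmap ⟨a, habk, rfl⟩
      have hall : ∀ k, Ibar ≤ subDerived K ((ℕ →₀ H) ⧸ J) Ibar k := by
        intro k
        induction k with
        | zero => exact le_refl _
        | succ k ih => exact le_trans hle (bk_mono ih ih)
      have := hall n
      rw [hn] at this
      exact le_bot_iff.1 this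
    intro I hsolv _
    exact ⟨0, fun n _ => by rw [key _ (hsolv n), key _ (hsolv 0)]⟩
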